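/- Let n be a positive integer, 1 < p < ∞, 1 ≤ q < ∞, and β > p − 1, and let Ω = B(0,1) be the open unit ball in ℝⁿ. Then the (q,p,β)-Hardy–Sobolev inequality fails in Ω: there is no constant C > 0 such that (∫_Ω |u(x)|^q d(x,Ωᶜ)^{(q/p)(n−p+β)−n} dx)^{1/q} ≤ C (∫_Ω |∇u(x)|^p d(x,Ωᶜ)^β dx)^{1/p} for every admissible u. -/

import Mathlib

open MeasureTheory Metric Set
open scoped ENNReal NNReal

noncomputable section

/-- The distance from `x` to the complement of `Ω`. -/
def distC {n : ℕ} (Ω : Set (EuclideanSpace ℝ (Fin n))) (x : EuclideanSpace ℝ (Fin n)) : ℝ :=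
  Metric.infDist x Ωᶜ

/-- The distance between two sets. -/
def sDist {n : ℕ} (E F : Set (EuclideanSpace ℝ (Fin n))) : ℝ :=
  sInf (Set.image2 dist E F)

/-- A function is admissible for `Ω` if it is Lipschitz and has compact support contained
in `Ω`. -/
def Admissible {n : ℕ} (Ω : Set (EuclideanSpace ℝ (Fin n)))
    (u : EuclideanSpace ℝ (Fin n) → ℝ) : Prop :=
  (∃ K : NNReal, LipschitzWith K u) ∧ HasCompactSupport u ∧ tsupport u ⊆ Ω

/-- `E` is compactly contained in `Ω`: `E` is bounded and has positive distance to `Ωᶜ`. -/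
def CptIn {n : ℕ} (E Ω : Set (EuclideanSpace ℝ (Fin n))) : Prop :=
  Bornology.IsBounded E ∧ 0 < sDist E Ωᶜ

/-- The weighted `p`-energy of `u` on `Ω` with the distance weight `d(x,Ωᶜ)^β`. -/
def energy {n : ℕ} (p β : ℝ) (Ω : Set (EuclideanSpace ℝ (Fin n)))
    (u : EuclideanSpace ℝ (Fin n) → ℝ) : ℝ≥0∞ :=
  ∫⁻ x in Ω, ENNReal.ofReal (‖fderiv ℝ u x‖ ^ p * distC Ω x ^ β)

/-- The weighted relative `(p,β)`-capacity of `E` in `Ω`. -/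
def wcap {n : ℕ} (p β : ℝ) (E Ω : Set (EuclideanSpace ℝ (Fin n))) : ℝ≥0∞ :=
  ⨅ (u : EuclideanSpace ℝ (Fin n) → ℝ)
    (_ : Admissible Ω u ∧ ∀ x ∈ E, 1 ≤ u x), energy p β Ω u

/-- The `(q,p,β)`-Hardy–Sobolev inequality holds in `Ω` with constant `C`. -/
def HardySobolev {n : ℕ} (q p β : ℝ) (Ω : Set (EuclideanSpace ℝ (Fin n))) (C : ℝ) : Prop :=
  ∀ u : EuclideanSpace ℝ (Fin n) → ℝ, Admissible Ω u →
    (∫⁻ x in Ω, ENNReal.ofReal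
        (|u x| ^ q * distC Ω x ^ (q / p * ((n : ℝ) - p + β) - n))) ^ (1 / q) ≤
      ENNReal.ofReal C * (energy p β Ω u) ^ (1 / p)

/-!
Test the inequality on the radial cutoffs `u_δ`, equal to `1` on the ball of radius `1 - 2δ` and
vanishing outside the ball of radius `1 - δ`. The left-hand side stays bounded below by the
contribution of the ball of radius `1/2`. On the other hand `|∇u_δ| ≤ 1/δ`, and `∇u_δ` is
supported in a shell of volume `O(δ)` on which `d(x, Ωᶜ) ≤ 2δ`, so the energy of `u_δ` is
`O(δ ^ (β - p + 1))`, which tends to `0` because `β > p - 1`.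
-/

open Topology Filter

theorem infDist_compl_ball_zero {E : Type*} [NormedAddCommGroup E] [NormedSpace ℝ E]
    [Nontrivial E] {x : E} {r : ℝ} (hx : ‖x‖ ≤ r) :
    infDist x (ball 0 r)ᶜ = r - ‖x‖ := by
  obtain ⟨v, hv, hxv⟩ : ∃ v : E, ‖v‖ = 1 ∧ ‖x‖ • v = x := by
    rcases eq_or_ne x 0 with rfl | hx0
    · obtain ⟨v, hv⟩ := exists_norm_eq E zero_le_one
      exact ⟨v, hv, by simp⟩
    · exact ⟨‖x‖⁻¹ • x, by simp [norm_smul, hx0], by simp [smul_smul, hx0]⟩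
  have hr : 0 ≤ r := (norm_nonneg x).trans hx
  have hrv : r • v ∈ (ball (0 : E) r)ᶜ := by simp [norm_smul, hv, abs_of_nonneg hr]
  refine le_antisymm ?_ ((le_infDist ⟨_, hrv⟩).2 fun y hy => ?_)
  · calc infDist x (ball 0 r)ᶜ ≤ dist x (r • v) := infDist_le_dist_of_mem hrv
      _ = r - ‖x‖ := by
        nth_rw 1 [dist_eq_norm, ← hxv]
        rw [← sub_smul, norm_smul, hv, mul_one, Real.norm_eq_abs,
          abs_of_nonpos (sub_nonpos.2 hx), neg_sub]
  · have hy : r ≤ ‖y‖ := by simpa using hy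
    have := norm_sub_norm_le y x
    rw [dist_comm, dist_eq_norm]
    linarith

theorem min_rpow_le_rpow_of_mem_Icc {a b t : ℝ} (ha : 0 < a) (ht : t ∈ Icc a b) (α : ℝ) :
    min (a ^ α) (b ^ α) ≤ t ^ α := by
  rcases le_total 0 α with hα | hα
  · exact (min_le_left _ _).trans (Real.rpow_le_rpow ha.le ht.1 hα)
  · exact (min_le_right _ _).trans (Real.rpow_le_rpow_of_nonpos (ha.trans_le ht.1) ht.2 hα)

open Module in
theorem addHaar_ball_diff_ball_le {E : Type*} [NormedAddCommGroup E] [NormedSpace ℝ E]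
    [FiniteDimensional ℝ E] [MeasurableSpace E] [BorelSpace E] (μ : Measure E)
    [μ.IsAddHaarMeasure] {t : ℝ} (ht₀ : 0 ≤ t) (ht₁ : t < 1) :
    μ (ball 0 1 \ ball 0 (1 - t)) ≤ ENNReal.ofReal (finrank ℝ E * t) * μ (ball 0 1) := by
  have bernoulli : 1 ≤ finrank ℝ E * t + (1 - t) ^ finrank ℝ E := by
    have := one_add_mul_le_pow (a := -t) (by linarith) (finrank ℝ E)
    rw [← sub_eq_add_neg] at this
    linarith
  rw [measure_sdiff (ball_subset_ball (by linarith)) measurableSet_ball.nullMeasurableSet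
    measure_ball_lt_top.ne, tsub_le_iff_right,
    Measure.addHaar_ball_of_pos μ (0 : E) (by linarith : 0 < 1 - t), ← add_mul,
    ← ENNReal.ofReal_add (by positivity) (pow_nonneg (by linarith) _)]
  calc μ (ball 0 1) = ENNReal.ofReal 1 * μ (ball 0 1) := by rw [ENNReal.ofReal_one, one_mul]
    _ ≤ _ := by gcongr

section Cutoff

variable {E : Type*} [NormedAddCommGroup E]

def cutoff (δ : ℝ) (x : E) : ℝ := min 1 (max 0 ((1 - δ - ‖x‖) / δ))

theorem lipschitzWith_cutoff {δ : ℝ} (hδ : 0 < δ) :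
    LipschitzWith (Real.toNNReal δ⁻¹) (cutoff δ : E → ℝ) := by
  have hlin : LipschitzWith (Real.toNNReal δ⁻¹) fun x : E => (1 - δ - ‖x‖) / δ := by
    refine LipschitzWith.of_dist_le_mul fun x y => ?_
    rw [Real.coe_toNNReal _ (inv_nonneg.2 hδ.le), Real.dist_eq, ← sub_div, abs_div,
      abs_of_pos hδ, div_eq_inv_mul, sub_sub_sub_cancel_left, ← Real.dist_eq]
    gcongr
    simpa [dist_eq_norm, norm_sub_rev] using dist_norm_norm_le y x
  exact (hlin.const_max 0).const_min 1

theorem cutoff_eq_one {δ : ℝ} (hδ : 0 < δ) {x : E} (hx : ‖x‖ ≤ 1 - 2 * δ) :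
    cutoff δ x = 1 :=
  min_eq_left <| ((one_le_div hδ).2 (by linarith)).trans (le_max_right _ _)

theorem cutoff_eq_zero {δ : ℝ} (hδ : 0 < δ) {x : E} (hx : 1 - δ ≤ ‖x‖) :
    cutoff δ x = 0 := by
  rw [cutoff, max_eq_left (div_nonpos_of_nonpos_of_nonneg (by linarith) hδ.le),
    min_eq_right zero_le_one]

theorem tsupport_cutoff_subset {δ : ℝ} (hδ : 0 < δ) :
    tsupport (cutoff δ : E → ℝ) ⊆ closedBall 0 (1 - δ) := by
  refine closure_minimal (fun x hx => ?_) isClosed_closedBall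
  by_contra h
  exact hx (cutoff_eq_zero hδ (by simp at h; linarith))

theorem fderiv_cutoff_eq_zero [NormedSpace ℝ E] {δ : ℝ} (hδ : 0 < δ) {x : E}
    (hx : ‖x‖ < 1 - 2 * δ) :
    fderiv ℝ (cutoff δ) x = 0 := by
  have : cutoff δ =ᶠ[𝓝 x] fun _ => (1 : ℝ) := by
    filter_upwards [isOpen_ball.mem_nhds (mem_ball_zero_iff.2 hx)] with y hy
    exact cutoff_eq_one hδ (mem_ball_zero_iff.1 hy).le
  rw [this.fderiv_eq, fderiv_const_apply]

end Cutoff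

theorem not_hardySobolev_of_tendsto_energy {n : ℕ} {q p β C : ℝ}
    {Ω : Set (EuclideanSpace ℝ (Fin n))} {ι : Type*} {l : Filter ι} [l.NeBot]
    {u : ι → EuclideanSpace ℝ (Fin n) → ℝ} {L : ℝ≥0∞} (hq : 0 < q) (hp : 0 < p) (hL : L ≠ 0)
    (hadm : ∀ᶠ i in l, Admissible Ω (u i))
    (hlow : ∀ᶠ i in l,
      L ≤ ∫⁻ x in Ω, ENNReal.ofReal (|u i x| ^ q * distC Ω x ^ (q / p * ((n : ℝ) - p + β) - n)))
    (henergy : Tendsto (fun i => energy p β Ω (u i)) l (𝓝 0)) :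
    ¬ HardySobolev q p β Ω C := by
  intro hHS
  have hrhs : Tendsto (fun i => ENNReal.ofReal C * energy p β Ω (u i) ^ (1 / p)) l (𝓝 0) := by
    have := ENNReal.Tendsto.const_mul (henergy.ennrpow_const (1 / p))
      (Or.inr (ENNReal.ofReal_ne_top (r := C)))
    rwa [ENNReal.zero_rpow_of_pos (one_div_pos.2 hp), mul_zero] at this
  have hpos : 0 < L ^ (1 / q) :=
    ENNReal.rpow_pos_of_nonneg (pos_iff_ne_zero.2 hL) (one_div_nonneg.2 hq.le)
  obtain ⟨i, hi_adm, hi_low, hi_small⟩ :=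
    (hadm.and (hlow.and (hrhs.eventually (gt_mem_nhds hpos)))).exists
  exact (hi_small.trans_le ((ENNReal.rpow_le_rpow hi_low (one_div_nonneg.2 hq.le)).trans
    (hHS _ hi_adm))).false

section UnitBall

variable {n : ℕ}

local notation "𝔼" => EuclideanSpace ℝ (Fin n)

theorem distC_ball_zero_one (hn : 0 < n) {x : 𝔼} (hx : ‖x‖ ≤ 1) :
    distC (ball 0 1) x = 1 - ‖x‖ := by
  have : Nonempty (Fin n) := ⟨⟨0, hn⟩⟩
  exact infDist_compl_ball_zero hx

theorem admissible_cutoff {δ : ℝ} (hδ : 0 < δ) : Admissible (ball (0 : 𝔼) 1) (cutoff δ) :=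
  ⟨⟨_, lipschitzWith_cutoff hδ⟩,
    (isCompact_closedBall 0 (1 - δ)).of_isClosed_subset (isClosed_tsupport _)
      (tsupport_cutoff_subset hδ),
    (tsupport_cutoff_subset hδ).trans (closedBall_subset_ball (by linarith))⟩

theorem energy_cutoff_le (hn : 0 < n) {p β δ : ℝ} (hp : 0 < p) (hβ : 0 ≤ β) (hδ : 0 < δ)
    (hδ₁ : 2 * δ < 1) :
    energy p β (ball (0 : 𝔼) 1) (cutoff δ) ≤
      ENNReal.ofReal (2 ^ (β + 1) * n * δ ^ (β - p + 1)) * volume (ball (0 : 𝔼) 1) := by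
  set c := ENNReal.ofReal (δ⁻¹ ^ p * (2 * δ) ^ β)
  have hpt : ∀ x ∈ ball (0 : 𝔼) 1,
      ENNReal.ofReal (‖fderiv ℝ (cutoff δ) x‖ ^ p * distC (ball 0 1) x ^ β) ≤
        (ball (0 : 𝔼) (1 - 2 * δ))ᶜ.indicator (fun _ => c) x := by
    intro x hx
    rw [mem_ball_zero_iff] at hx
    by_cases hin : ‖x‖ < 1 - 2 * δ
    · simp [fderiv_cutoff_eq_zero hδ hin, Real.zero_rpow hp.ne']
    · rw [indicator_of_mem (by simpa using hin)]
      have hgrad : ‖fderiv ℝ (cutoff δ) x‖ ≤ δ⁻¹ := by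
        simpa [Real.coe_toNNReal _ (inv_nonneg.2 hδ.le)] using
          norm_fderiv_le_of_lipschitz ℝ (lipschitzWith_cutoff (E := 𝔼) hδ) (x₀ := x)
      have hdist : distC (ball 0 1) x ≤ 2 * δ := by
        rw [distC_ball_zero_one hn hx.le]
        linarith
      refine ENNReal.ofReal_le_ofReal ?_
      gcongr
      · exact Real.rpow_nonneg infDist_nonneg β
      · exact infDist_nonneg
  have hshell := addHaar_ball_diff_ball_le (volume : Measure 𝔼) (t := 2 * δ) (by positivity) hδ₁
  rw [finrank_euclideanSpace_fin] at hshell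
  have hexp : δ⁻¹ ^ p * (2 * δ) ^ β * (n * (2 * δ)) = 2 ^ (β + 1) * n * δ ^ (β - p + 1) := by
    rw [Real.inv_rpow hδ.le, Real.mul_rpow zero_le_two hδ.le, Real.rpow_add_one two_ne_zero,
      Real.rpow_add_one hδ.ne', Real.rpow_sub hδ]
    field_simp
  calc energy p β (ball (0 : 𝔼) 1) (cutoff δ)
      ≤ ∫⁻ x in ball (0 : 𝔼) 1, (ball (0 : 𝔼) (1 - 2 * δ))ᶜ.indicator (fun _ => c) x :=
        setLIntegral_mono' measurableSet_ball hpt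
    _ = c * volume (ball (0 : 𝔼) 1 \ ball 0 (1 - 2 * δ)) := by
        rw [lintegral_indicator_const measurableSet_ball.compl,
          Measure.restrict_apply measurableSet_ball.compl, inter_comm, Set.sdiff_eq]
    _ ≤ c * (ENNReal.ofReal (n * (2 * δ)) * volume (ball (0 : 𝔼) 1)) := by gcongr
    _ = _ := by
        rw [← mul_assoc, ← ENNReal.ofReal_mul (by positivity), hexp]

theorem tendsto_energy_cutoff (hn : 0 < n) {p β : ℝ} (hp : 1 ≤ p) (hβ : p - 1 < β) :
    Tendsto (fun δ => energy p β (ball (0 : 𝔼) 1) (cutoff δ)) (𝓝[>] 0) (𝓝 0) := by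
  have hpow : Tendsto (fun δ : ℝ => δ ^ (β - p + 1)) (𝓝[>] 0) (𝓝 0) := by
    simpa [Real.zero_rpow (by linarith : β - p + 1 ≠ 0)] using
      (Real.continuousAt_rpow_const 0 (β - p + 1) (Or.inr (by linarith))).tendsto.mono_left
        nhdsWithin_le_nhds
  have hbound : Tendsto
      (fun δ : ℝ => ENNReal.ofReal (2 ^ (β + 1) * n * δ ^ (β - p + 1)) * volume (ball (0 : 𝔼) 1))
      (𝓝[>] 0) (𝓝 0) := by
    simpa using ENNReal.Tendsto.mul_const
      (ENNReal.tendsto_ofReal (hpow.const_mul ((2 : ℝ) ^ (β + 1) * n)))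
      (Or.inr measure_ball_lt_top.ne)
  refine tendsto_of_tendsto_of_tendsto_of_le_of_le' tendsto_const_nhds hbound
    (Eventually.of_forall fun _ => zero_le) ?_
  filter_upwards [Ioo_mem_nhdsGT (by norm_num : (0 : ℝ) < 1 / 2)] with δ hδ
  exact energy_cutoff_le hn (by linarith) (by linarith) hδ.1 (by linarith [hδ.2])

theorem lintegral_cutoff_ge (hn : 0 < n) {δ : ℝ} (hδ : 0 < δ) (hδ₁ : 4 * δ ≤ 1) (q α : ℝ) :
    ENNReal.ofReal (min (2⁻¹ ^ α) 1) * volume (ball (0 : 𝔼) 2⁻¹) ≤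
      ∫⁻ x in ball (0 : 𝔼) 1, ENNReal.ofReal (|cutoff δ x| ^ q * distC (ball 0 1) x ^ α) := by
  rw [← setLIntegral_const]
  refine (setLIntegral_mono' measurableSet_ball fun x hx => ?_).trans
    (lintegral_mono_set (ball_subset_ball (by norm_num)))
  rw [mem_ball_zero_iff] at hx
  have hdist : distC (ball 0 1) x ∈ Icc 2⁻¹ 1 := by
    rw [distC_ball_zero_one hn (by linarith)]
    constructor <;> linarith [norm_nonneg x]
  rw [cutoff_eq_one hδ (by linarith), abs_one, Real.one_rpow, one_mul]
  refine ENNReal.ofReal_le_ofReal ?_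
  simpa using min_rpow_le_rpow_of_mem_Icc (by norm_num) hdist α

end UnitBall

/-- In the unit ball, for `β > p - 1` the `(q,p,β)`-Hardy–Sobolev inequality fails. -/
theorem stmt11 {n : ℕ} (hn : 0 < n) (p q β : ℝ) (hp : 1 < p) (hq : 1 ≤ q)
    (hβ : p - 1 < β) :
    ¬ ∃ C > 0, HardySobolev q p β (Metric.ball (0 : EuclideanSpace ℝ (Fin n)) 1) C := by
  rintro ⟨C, -, hHS⟩
  have hL : ENNReal.ofReal (min (2⁻¹ ^ (q / p * ((n : ℝ) - p + β) - n)) 1) *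
      volume (ball (0 : EuclideanSpace ℝ (Fin n)) 2⁻¹) ≠ 0 :=
    mul_ne_zero (by simp [Real.rpow_pos_of_pos]) (measure_ball_pos _ _ (by norm_num)).ne'
  refine not_hardySobolev_of_tendsto_energy (l := 𝓝[>] 0) (u := cutoff) (by linarith)
    (by linarith) hL (eventually_mem_nhdsWithin.mono fun δ hδ => admissible_cutoff hδ) ?_
    (tendsto_energy_cutoff hn hp.le hβ) hHS
  filter_upwards [Ioo_mem_nhdsGT (by norm_num : (0 : ℝ) < 1 / 4)] with δ hδ
  exact lintegral_cutoff_ge hn hδ.1 (by linarith [hδ.2]) q _
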